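/- Let Σ be a linearly ordered alphabet with minimum element #, and let T_1 and T_2 be strings of the same length n, each containing exactly one occurrence of # and each ending with #. If BWT(T_1) = BWT(T_2), then T_1 = T_2. In other words, the Burrows-Wheeler transform is injective on terminated strings. -/

import Mathlib

/-!
Prepending the BWT column to the sorted `k`-prefixes of the rotations and sorting again yields
the sorted `(k + 1)`-prefixes: moving the last character of every rotation to the front permutes
the rotations, and truncation is monotone for the lexicographic order. So the length and the BWT
determine the sorted rotations, hence the multiset of rotations, and two strings with the same
BWT are rotations of each other. A string that ends with a letter occurring in it only once is
the only one of its rotations ending with that letter.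
-/

/-- The list of all `n` rotations of a string `T` of length `n`:
the `i`-th rotation is `T[i..n−1]T[0..i−1]`. -/
def rotations {α : Type*} (T : List α) : List (List α) :=
  (List.range T.length).map fun i => T.drop i ++ T.take i

/-- The matrix `M` of `T`: the multiset of all rotations of `T`,
sorted lexicographically. -/
def sortedRotations {α : Type*} [LinearOrder α] (T : List α) : List (List α) :=
  Multiset.sort (rotations T : Multiset (List α)) (· ≤ ·)

/-- The Burrows-Wheeler transform of `T`: the last characters of the
lexicographically sorted rotations of `T`. -/
def bwt {α : Type*} [LinearOrder α] (T : List α) : List α :=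
  (sortedRotations T).filterMap List.getLast?

open List

section

variable {α β : Type*}

theorem List.Lex.of_take {r : α → α → Prop} :
    ∀ {k : ℕ} {l₁ l₂ : List α}, Lex r (l₁.take k) (l₂.take k) → Lex r l₁ l₂
  | 0, _, _, h => by simp at h
  | _ + 1, [], [], h => by simp at h
  | _ + 1, [], _ :: _, _ => .nil
  | _ + 1, _ :: _, [], h => by simp at h
  | _ + 1, _ :: _, _ :: _, .cons h => .cons (of_take h)
  | _ + 1, _ :: _, _ :: _, .rel h => .rel h

theorem List.monotone_take [LinearOrder α] (k : ℕ) : Monotone (take k : List α → List α) :=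
  fun _ _ h => le_of_not_gt fun hlt => not_lt_of_ge h (Lex.of_take hlt)

theorem Multiset.map_sort_of_monotone [LinearOrder α] [LinearOrder β] {f : α → β}
    (hf : Monotone f) (s : Multiset α) :
    (s.sort (· ≤ ·)).map f = (s.map f).sort (· ≤ ·) := by
  refine Perm.eq_of_pairwise' ((pairwise_sort _ _).map f fun _ _ h => hf h) (pairwise_sort _ _) ?_
  rw [← Multiset.coe_eq_coe, Multiset.sort_eq, ← Multiset.map_coe, Multiset.sort_eq]

theorem List.take_succ_rotate_length_concat {P : List α} {c : α} {k : ℕ} (hk : k ≤ P.length) :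
    ((P ++ [c]).rotate P.length).take (k + 1) = c :: (P ++ [c]).take k := by
  rw [rotate_append_length_eq, take_append_of_le_length hk]
  rfl

theorem zipWith_cons_filterMap_getLast? {S : List (List α)} {k : ℕ}
    (hS : ∀ R ∈ S, k < R.length) :
    zipWith cons (S.filterMap getLast?) (S.map (take k))
      = S.map fun R => (R.rotate (R.length - 1)).take (k + 1) := by
  induction S with
  | nil => rfl
  | cons R S ih =>
    obtain ⟨P, c, hR⟩ :=
      (eq_nil_or_concat R).resolve_left fun h => by simpa [h] using hS R mem_cons_self
    rw [concat_eq_append] at hR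
    subst hR
    have hk : k ≤ P.length := by simpa [Nat.lt_succ_iff] using hS _ mem_cons_self
    rw [filterMap_cons, getLast?_concat, map_cons, map_cons, zipWith_cons_cons,
      ih fun R' hR' => hS R' (mem_cons_of_mem _ hR'), length_append, length_singleton,
      Nat.add_sub_cancel, take_succ_rotate_length_concat hk]

theorem rotations_eq_map_rotate (T : List α) :
    rotations T = (range T.length).map T.rotate :=
  map_congr_left fun _ hi => (rotate_eq_drop_append_take (mem_range.mp hi).le).symm

theorem length_rotations (T : List α) : (rotations T).length = T.length := by
  simp [rotations]

theorem length_of_mem_rotations {T R : List α} (hR : R ∈ rotations T) : R.length = T.length := by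
  rw [rotations_eq_map_rotate] at hR
  obtain ⟨i, -, rfl⟩ := mem_map.mp hR
  exact length_rotate T i

theorem rotations_eq_cyclicPermutations {T : List α} (hT : T ≠ []) :
    rotations T = cyclicPermutations T := by
  refine ext_getElem ?_ fun i _ _ => ?_
  · rw [length_rotations, length_cyclicPermutations_of_ne_nil T hT]
  · simp [rotations_eq_map_rotate, getElem_cyclicPermutations]

theorem mem_rotations_iff {T R : List α} (hT : T ≠ []) : R ∈ rotations T ↔ R ~r T := by
  rw [rotations_eq_cyclicPermutations hT, mem_cyclicPermutations_iff]

theorem List.IsRotated.rotations_perm {T T' : List α} (h : T ~r T') :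
    rotations T ~ rotations T' := by
  rcases eq_or_ne T' [] with rfl | hT'
  · rw [isRotated_nil_iff.mp h]
  have hT : T ≠ [] := fun hT => hT' (isRotated_nil_iff.mp (hT ▸ h).symm)
  rw [rotations_eq_cyclicPermutations hT, rotations_eq_cyclicPermutations hT']
  exact h.cyclicPermutations.perm

theorem map_rotate_rotations (T : List α) (m : ℕ) :
    (rotations T).map (·.rotate m) = rotations (T.rotate m) := by
  simp only [rotations_eq_map_rotate, length_rotate, map_map]
  refine map_congr_left fun i _ => ?_
  simp only [Function.comp_apply, rotate_rotate, Nat.add_comm]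

theorem map_rotate_rotations_perm (T : List α) (m : ℕ) :
    (rotations T).map (·.rotate m) ~ rotations T := by
  rw [map_rotate_rotations]
  exact (IsRotated.symm ⟨m, rfl⟩).rotations_perm

section SortedRotations

variable [LinearOrder α]

theorem sortedRotations_perm (T : List α) : sortedRotations T ~ rotations T := by
  rw [← Multiset.coe_eq_coe]
  exact Multiset.sort_eq _ _

theorem length_sortedRotations (T : List α) : (sortedRotations T).length = T.length := by
  rw [(sortedRotations_perm T).length_eq, length_rotations]

theorem length_of_mem_sortedRotations {T R : List α} (hR : R ∈ sortedRotations T) :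
    R.length = T.length :=
  length_of_mem_rotations ((sortedRotations_perm T).mem_iff.mp hR)

theorem map_take_succ_sortedRotations {T : List α} {k : ℕ} (hk : k < T.length) :
    (sortedRotations T).map (take (k + 1))
      = ((zipWith cons (bwt T) ((sortedRotations T).map (take k)) : List (List α)) :
          Multiset (List α)).sort (· ≤ ·) := by
  have hlen : ∀ R ∈ sortedRotations T, R.length = T.length := fun _ =>
    length_of_mem_sortedRotations
  have hshift : (sortedRotations T).map (fun R => (R.rotate (R.length - 1)).take (k + 1))
      = ((sortedRotations T).map (·.rotate (T.length - 1))).map (take (k + 1)) := by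
    rw [map_map]
    exact map_congr_left fun R hR => by simp [hlen R hR]
  rw [bwt, zipWith_cons_filterMap_getLast? fun R hR => hlen R hR ▸ hk, hshift]
  conv_lhs => rw [sortedRotations, Multiset.map_sort_of_monotone (monotone_take _)]
  congr 1
  rw [Multiset.map_coe, Multiset.coe_eq_coe]
  exact ((((sortedRotations_perm T).map _).trans (map_rotate_rotations_perm T _)).map _).symm

theorem map_take_length_sortedRotations (T : List α) :
    (sortedRotations T).map (take T.length) = sortedRotations T :=
  (map_congr_left (g := id) fun _ hR =>
    take_of_length_le (length_of_mem_sortedRotations hR).le).trans (map_id _)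

theorem sortedRotations_eq_of_bwt_eq {T₁ T₂ : List α} (hlen : T₁.length = T₂.length)
    (hbwt : bwt T₁ = bwt T₂) : sortedRotations T₁ = sortedRotations T₂ := by
  have columns : ∀ k ≤ T₁.length,
      (sortedRotations T₁).map (take k) = (sortedRotations T₂).map (take k) := by
    intro k hk
    induction k with
    | zero =>
      exact ext_getElem (by simp [length_sortedRotations, hlen]) fun _ _ _ => by simp
    | succ k ih =>
      rw [map_take_succ_sortedRotations hk, map_take_succ_sortedRotations (hlen ▸ hk),
        ih (Nat.le_of_succ_le hk), hbwt]
  have := columns T₁.length le_rfl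
  rwa [map_take_length_sortedRotations, hlen, map_take_length_sortedRotations] at this

theorem isRotated_of_bwt_eq {T₁ T₂ : List α} (hlen : T₁.length = T₂.length)
    (hbwt : bwt T₁ = bwt T₂) : T₁ ~r T₂ := by
  rcases eq_or_ne T₁ [] with rfl | hT₁
  · rw [eq_nil_of_length_eq_zero hlen.symm]
  have hT₂ : T₂ ≠ [] := ne_nil_of_length_pos (hlen ▸ length_pos_of_ne_nil hT₁)
  have hperm : rotations T₁ ~ rotations T₂ :=
    (sortedRotations_perm T₁).symm.trans
      (sortedRotations_eq_of_bwt_eq hlen hbwt ▸ sortedRotations_perm T₂)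
  exact (mem_rotations_iff hT₂).mp
    (hperm.mem_iff.mp ((mem_rotations_iff hT₁).mpr (IsRotated.refl T₁)))

end SortedRotations

theorem List.IsRotated.eq_of_getLast?_eq [DecidableEq α] {l₁ l₂ : List α} {a : α} (h : l₁ ~r l₂)
    (h₁ : l₁.getLast? = some a) (h₂ : l₂.getLast? = some a) (hcount : l₂.count a = 1) :
    l₁ = l₂ := by
  obtain ⟨P, rfl⟩ := getLast?_eq_some_iff.mp h₂
  have ha : a ∉ P := count_eq_zero.mp (by simpa using hcount)
  obtain ⟨m, hm, rfl⟩ := isRotated_iff_mod.mp h.symm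
  rcases Nat.eq_zero_or_pos m with rfl | hm₀
  · exact rotate_zero _
  rcases eq_or_lt_of_le hm with rfl | hm'
  · exact rotate_length _
  have hmP : m ≤ P.length := by simpa [Nat.lt_succ_iff] using hm'
  have htake : P.take m ≠ [] := ne_nil_of_length_pos (by rw [length_take]; omega)
  rw [rotate_eq_drop_append_take hm, take_append_of_le_length hmP,
    getLast?_append_of_ne_nil _ htake] at h₁
  exact absurd (take_subset _ _ (mem_of_getLast? h₁)) ha

end

theorem bwt_injective_on_terminated_general {α : Type*} [LinearOrder α]
    (sharp : α)
    (T₁ T₂ : List α) (hlen : T₁.length = T₂.length)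
    (h₂count : T₂.count sharp = 1)
    (h₁last : T₁.getLast? = some sharp) (h₂last : T₂.getLast? = some sharp)
    (hbwt : bwt T₁ = bwt T₂) :
    T₁ = T₂ :=
  (isRotated_of_bwt_eq hlen hbwt).eq_of_getLast?_eq h₁last h₂last h₂count

/-- the Burrows-Wheeler transform is injective on terminated strings.
Let `#` (here `sharp`) be the minimum of the alphabet, and let `T₁`, `T₂` be strings of
the same length `n`, each containing exactly one occurrence of `#` and each ending
with `#`. If `BWT(T₁) = BWT(T₂)` then `T₁ = T₂`. -/
theorem bwt_injective_on_terminated {α : Type*} [LinearOrder α]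
    (sharp : α) (hsharp : ∀ x : α, sharp ≤ x)
    (T₁ T₂ : List α) (hlen : T₁.length = T₂.length)
    (h₁count : T₁.count sharp = 1) (h₂count : T₂.count sharp = 1)
    (h₁last : T₁.getLast? = some sharp) (h₂last : T₂.getLast? = some sharp)
    (hbwt : bwt T₁ = bwt T₂) :
    T₁ = T₂ :=
  bwt_injective_on_terminated_general sharp T₁ T₂ hlen h₂count h₁last h₂last hbwt
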